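/- arXiv:math/0406184 — 3 statements merged into one kernel-verified Lean document; each statement's English description precedes it below -/
import Mathlib

section
/- Let x_1, …, x_p ∈ ℝⁿ be the columns of X_n, let h_i = ‖x_i − x̄_i e‖ / √n, and suppose the diagonal entries ρ_{ii} = 1. Then ‖n R_n − X_nᵀ X_n‖ ≤ (b_1² + 2 b_1) W_n b_3^{−2} + n b_3^{−2} b_4², where b_1 = max_{1≤i≤p} |h_i − 1|, W_n = max_{1≤i<j≤p} |x_iᵀ x_j|, b_3 = min_{1≤i≤p} h_i, and b_4 = max_{1≤i≤p} |x̄_i|. -/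
open Filter Real

noncomputable section

/-- Lemma 2.2: a deterministic bound for the difference between the off-diagonal entries
of `n R_n` and of `XᵀX`: for all `i ≠ j`,
`|n ρ_{ij} − x_iᵀ x_j| ≤ (b_1² + 2 b_1) W_n b_3⁻² + n b_3⁻² b_4²`, where
`h_i = ‖x_i − x̄_i e‖/√n`, `b_1 = max_i |h_i − 1|`, `W_n = max_{i<j} |x_iᵀ x_j|`,
`b_3 = min_i h_i > 0` and `b_4 = max_i |x̄_i|`. -/
theorem lem_2_2
    (n p : ℕ) (hn : 0 < n) (hp : 0 < p)
    (x : Fin p → Fin n → ℝ)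
    (xbar : Fin p → ℝ) (hxbar : ∀ i, xbar i = (∑ k, x i k) / n)
    (h : Fin p → ℝ)
    (hh : ∀ i, h i = Real.sqrt (∑ k, (x i k - xbar i) ^ 2) / Real.sqrt n)
    (hpos : ∀ i, 0 < h i)
    (ρ : Fin p → Fin p → ℝ)
    (hρ : ∀ i j, ρ i j = (∑ k, (x i k - xbar i) * (x j k - xbar j)) /
      (Real.sqrt (∑ k, (x i k - xbar i) ^ 2) * Real.sqrt (∑ k, (x j k - xbar j) ^ 2)))
    (b1 W b3 b4 : ℝ)
    (hb1 : b1 = ⨆ i : Fin p, |h i - 1|)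
    (hW : W = ⨆ q : {q : Fin p × Fin p // q.1 < q.2}, |∑ k, x q.1.1 k * x q.1.2 k|)
    (hb3 : b3 = ⨅ i : Fin p, h i)
    (hb4 : b4 = ⨆ i : Fin p, |xbar i|) :
    ∀ i j : Fin p, i ≠ j →
      |(n : ℝ) * ρ i j - ∑ k, x i k * x j k| ≤
        (b1 ^ 2 + 2 * b1) * W * (b3 ^ 2)⁻¹ + (n : ℝ) * (b3 ^ 2)⁻¹ * b4 ^ 2 := by
  intro i j hij
  haveI : Nonempty (Fin p) := ⟨i⟩
  have hnR : (0:ℝ) < n := by exact_mod_cast hn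
  have hb1i : ∀ k, |h k - 1| ≤ b1 := fun k => hb1 ▸ le_ciSup (f := fun i => |h i - 1|) (Set.Finite.bddAbove (Set.finite_range _)) k
  have hb1nn : (0:ℝ) ≤ b1 := le_trans (abs_nonneg _) (hb1i i)
  have hb3i : ∀ k, b3 ≤ h k := fun k => hb3 ▸ ciInf_le (f := h) (Set.Finite.bddBelow (Set.finite_range _)) k
  have hb3pos : 0 < b3 := by
    obtain ⟨k0, hk0⟩ := Finite.exists_min h
    exact lt_of_lt_of_le (hpos k0) (hb3 ▸ le_ciInf hk0)
  have hb4i : ∀ k, |xbar k| ≤ b4 := fun k => hb4 ▸ le_ciSup (f := fun i => |xbar i|) (Set.Finite.bddAbove (Set.finite_range _)) k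
  have hWT : |∑ k, x i k * x j k| ≤ W := by
    rcases hij.lt_or_gt with hlt | hlt
    · exact hW ▸ le_ciSup (f := fun q : {q : Fin p × Fin p // q.1 < q.2} => |∑ k, x q.1.1 k * x q.1.2 k|)
        (Set.Finite.bddAbove (Set.finite_range _)) ⟨(i, j), hlt⟩
    · have hsym : (∑ k, x i k * x j k) = ∑ k, x j k * x i k := by
        simp [mul_comm]
      rw [hsym]
      exact hW ▸ le_ciSup (f := fun q : {q : Fin p × Fin p // q.1 < q.2} => |∑ k, x q.1.1 k * x q.1.2 k|)
        (Set.Finite.bddAbove (Set.finite_range _)) ⟨(j, i), hlt⟩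
  have hWnn : 0 ≤ W := le_trans (abs_nonneg _) hWT
  have hsum : ∀ m : Fin p, ∑ k, x m k = n * xbar m := by
    intro m
    rw [hxbar m]
    field_simp
  -- key identity for the centered inner product
  have hA : (∑ k, (x i k - xbar i) * (x j k - xbar j))
      = (∑ k, x i k * x j k) - n * (xbar i * xbar j) := by
    have e1 : ∀ k, (x i k - xbar i) * (x j k - xbar j)
        = x i k * x j k - xbar i * x j k - xbar j * x i k + xbar i * xbar j := by
      intro k; ring
    simp_rw [e1]
    rw [Finset.sum_add_distrib, Finset.sum_sub_distrib, Finset.sum_sub_distrib,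
      ← Finset.mul_sum, ← Finset.mul_sum, hsum i, hsum j, Finset.sum_const,
      Finset.card_univ, Fintype.card_fin, nsmul_eq_mul]
    ring
  -- norms in terms of h
  have hs : ∀ m : Fin p, Real.sqrt (∑ k, (x m k - xbar m) ^ 2) = h m * Real.sqrt n := by
    intro m
    rw [hh m]
    field_simp
  have hipos := hpos i
  have hjpos := hpos j
  have hnρ : (n : ℝ) * ρ i j
      = ((∑ k, x i k * x j k) - n * (xbar i * xbar j)) / (h i * h j) := by
    rw [hρ i j, hs i, hs j, hA]
    have hsq : Real.sqrt n * Real.sqrt n = (n : ℝ) := Real.mul_self_sqrt (le_of_lt hnR)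
    field_simp
    ring_nf
    rw [Real.sq_sqrt (le_of_lt hnR)]
    ring
  set T := ∑ k, x i k * x j k with hT
  have hdenpos : 0 < h i * h j := mul_pos hipos hjpos
  have hkey : (n : ℝ) * ρ i j - T = (T * (1 - h i * h j) - n * (xbar i * xbar j)) / (h i * h j) := by
    rw [hnρ]
    field_simp
    ring
  rw [hkey]
  -- bound |1 - h i * h j|
  have h1 : |1 - h i * h j| ≤ b1 ^ 2 + 2 * b1 := by
    have e2 : 1 - h i * h j = -((h i - 1) + (h j - 1) + (h i - 1) * (h j - 1)) := by ring
    rw [e2, abs_neg]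
    calc |(h i - 1) + (h j - 1) + (h i - 1) * (h j - 1)|
        ≤ |h i - 1| + |h j - 1| + |h i - 1| * |h j - 1| := by
          refine le_trans (abs_add_le _ _) ?_
          gcongr
          · exact abs_add_le _ _
          · exact le_of_eq (abs_mul _ _)
      _ ≤ b1 + b1 + b1 * b1 :=
          add_le_add (add_le_add (hb1i i) (hb1i j))
            (mul_le_mul (hb1i i) (hb1i j) (abs_nonneg _) hb1nn)
      _ = b1 ^ 2 + 2 * b1 := by ring
  have hnum : |T * (1 - h i * h j) - n * (xbar i * xbar j)|
      ≤ (b1 ^ 2 + 2 * b1) * W + n * b4 ^ 2 := by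
    refine le_trans (abs_sub _ _) (add_le_add ?_ ?_)
    · rw [abs_mul]
      calc |T| * |1 - h i * h j| ≤ W * (b1 ^ 2 + 2 * b1) :=
            mul_le_mul hWT h1 (abs_nonneg _) hWnn
        _ = (b1 ^ 2 + 2 * b1) * W := by ring
    · rw [abs_mul, abs_mul, Nat.abs_cast]
      have h4i := hb4i i
      have h4j := hb4i j
      have h4nn : 0 ≤ b4 := le_trans (abs_nonneg _) h4i
      calc (n : ℝ) * (|xbar i| * |xbar j|) ≤ (n : ℝ) * (b4 * b4) :=
            mul_le_mul_of_nonneg_left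
              (mul_le_mul h4i h4j (abs_nonneg _) h4nn) hnR.le
        _ = (n : ℝ) * b4 ^ 2 := by ring
  have hb3sq : b3 ^ 2 ≤ h i * h j := by
    calc b3 ^ 2 = b3 * b3 := sq b3
      _ ≤ h i * h j :=
          mul_le_mul (hb3i i) (hb3i j) hb3pos.le (le_trans hb3pos.le (hb3i i))
  have hb3sqpos : 0 < b3 ^ 2 := pow_pos hb3pos 2
  have hbnn : 0 ≤ (b1 ^ 2 + 2 * b1) * W + n * b4 ^ 2 := by
    have h4nn : 0 ≤ b4 := le_trans (abs_nonneg _) (hb4i i)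
    positivity
  calc |(T * (1 - h i * h j) - n * (xbar i * xbar j)) / (h i * h j)|
      = |T * (1 - h i * h j) - n * (xbar i * xbar j)| / (h i * h j) := by
        rw [abs_div, abs_of_pos hdenpos]
    _ ≤ ((b1 ^ 2 + 2 * b1) * W + n * b4 ^ 2) / b3 ^ 2 :=
        div_le_div₀ hbnn hnum hb3sqpos hb3sq
    _ = (b1 ^ 2 + 2 * b1) * W * (b3 ^ 2)⁻¹ + (n : ℝ) * (b3 ^ 2)⁻¹ * b4 ^ 2 := by
        rw [div_eq_mul_inv]
        ring

end
end

section
/- Let ζ_1, ζ_2, … be i.i.d. real random variables with Eζ_1 = 0 and E|ζ_1|^r < ∞ for some r > 1, and let δ > 0. Then P(|Σ_{k=1}^n ζ_k| > nδ) = O(n^{1−r}) as n → ∞. -/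
open MeasureTheory ProbabilityTheory Filter Real Asymptotics

noncomputable section

/-!
Truncate each `ζ k` at level `n` and centre it at `E = 𝔼[truncation (ζ 0) n]`, which tends
to `𝔼[ζ 0] = 0`. Off the event that some `|ζ k| ≥ n`, whose probability is at most
`n · 𝔼|ζ 0|^r / n^r`, the sum is within `n |E| ≤ n δ / 2` of the sum of the centred truncated
variables `Y k`. These satisfy the Bernstein-type moment condition `𝔼|Y|^a ≤ v c^(a-2)`,
`2 ≤ a ≤ 2M`, with `v = K n^e` and `c = n^θ`, where `e + θ (a - 2)` is the chord of the convex
function `a ↦ (a - r)⁺` over `[2, 2M]`. Under this condition the Rosenthal-type bound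
`𝔼 S_ℓ^(2M) ≤ D_M (ℓ v c^(2M-2) + (ℓ v)^M)` holds (induction on `M`, through the binomial
expansion of `(S_ℓ + Y_ℓ)^(2M)`), and Markov's inequality at order `2M ≥ r` gives the rate
`n^(1-r)`.
-/

lemma abs_pow_le_one_add_pow_two_mul (x : ℝ) {i m : ℕ} (hi : i ≤ 2 * m) :
    |x| ^ i ≤ 1 + x ^ (2 * m) := by
  rw [← (even_two_mul m).pow_abs]
  rcases le_total |x| 1 with hx | hx
  · linarith [pow_le_one₀ (abs_nonneg x) hx (n := i), pow_nonneg (abs_nonneg x) (2 * m)]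
  · linarith [pow_le_pow_right₀ hx hi]

lemma sq_le_add_pow_succ {x : ℝ} (hx : 0 ≤ x) {m : ℕ} (hm : 1 ≤ m) :
    x ^ 2 ≤ x + x ^ (m + 1) := by
  rcases le_total x 1 with h | h
  · nlinarith [pow_nonneg hx (m + 1)]
  · nlinarith [pow_le_pow_right₀ h (show 2 ≤ m + 1 by omega)]

lemma pow_le_one_add_rpow_mul_rpow {z y b r : ℝ} (hz : 0 ≤ z) (hzy : z ≤ y) (hzb : z ≤ b)
    (hr : 0 < r) (a : ℕ) : z ^ a ≤ (1 + y ^ r) * b ^ max ((a : ℝ) - r) 0 := by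
  have hyr : z ^ r ≤ y ^ r := rpow_le_rpow hz hzy hr.le
  rw [← rpow_natCast]
  rcases le_total r a with hra | hra
  · rw [max_eq_left (sub_nonneg.mpr hra)]
    calc z ^ (a : ℝ) = z ^ r * z ^ ((a : ℝ) - r) := by
          rw [← rpow_add' hz (by linarith), add_sub_cancel]
      _ ≤ (1 + y ^ r) * b ^ ((a : ℝ) - r) :=
          mul_le_mul (by linarith) (rpow_le_rpow hz hzb (by linarith)) (rpow_nonneg hz _)
            (by linarith [rpow_nonneg (hz.trans hzy) r])
  · rw [max_eq_right (sub_nonpos.mpr hra), rpow_zero, mul_one]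
    rcases le_total z 1 with hz1 | hz1
    · linarith [rpow_le_one hz hz1 (Nat.cast_nonneg a), rpow_nonneg (hz.trans hzy) r]
    · linarith [rpow_le_rpow_of_exponent_le hz1 hra]

lemma exists_chord_exponents {r : ℝ} (hr : 1 < r) {m : ℕ} (hm : 1 ≤ m) (hrm : r ≤ m + 1) :
    ∃ e θ : ℝ, 0 ≤ e ∧ e + θ * (2 * m) = 2 * m + 2 - r ∧ (m + 1) * (1 + e) ≤ 2 * m + 3 - r ∧
      ∀ a : ℕ, 2 ≤ a → a ≤ 2 * m + 2 → max ((a : ℝ) - r) 0 ≤ e + θ * (a - 2) := by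
  have hm' : (1 : ℝ) ≤ m := by exact_mod_cast hm
  rcases le_total r 2 with hr2 | hr2
  · refine ⟨2 - r, 1, by linarith, by ring, by nlinarith, fun a ha _ => ?_⟩
    have ha' : (2 : ℝ) ≤ a := by exact_mod_cast ha
    rw [max_eq_left (by linarith)]
    linarith
  · refine ⟨0, (2 * m + 2 - r) / (2 * m), le_rfl, by field_simp; ring, by linarith,
      fun a ha haM => ?_⟩
    have ha' : (2 : ℝ) ≤ a := by exact_mod_cast ha
    have haM' : (a : ℝ) ≤ 2 * m + 2 := by exact_mod_cast haM
    rw [zero_add, div_mul_eq_mul_div]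
    refine max_le ?_ (by apply div_nonneg <;> nlinarith)
    rw [le_div_iff₀ (by linarith)]
    nlinarith

lemma rosenthal_terms_div_pow_le {N K e θ r δ : ℝ} {m : ℕ} (hN : 1 ≤ N) (hK : 0 ≤ K) (he : 0 ≤ e)
    (hδ : 0 < δ) (hchord : e + θ * (2 * m) = 2 * m + 2 - r)
    (hexp : (m + 1) * (1 + e) ≤ 2 * m + 3 - r) :
    (N * (K * N ^ e) * (N ^ θ) ^ (2 * m) + (N * (K * N ^ e)) ^ (m + 1)) / (N * δ) ^ (2 * m + 2) ≤
      (K + K ^ (m + 1)) / δ ^ (2 * m + 2) * N ^ (1 - r) := by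
  have hN0 : 0 < N := by linarith
  set x : ℝ := 2 * m + 3 - r
  have h1 : N * (K * N ^ e) * (N ^ θ) ^ (2 * m) = K * N ^ x := by
    rw [← rpow_natCast, ← rpow_mul hN0.le]
    calc N * (K * N ^ e) * N ^ (θ * ↑(2 * m)) = K * (N ^ (1 : ℝ) * N ^ e * N ^ (θ * ↑(2 * m))) := by
          rw [rpow_one]; ring
      _ = K * N ^ x := by
          rw [← rpow_add hN0, ← rpow_add hN0]
          congr 2
          push_cast
          linarith
  have h2 : (N * (K * N ^ e)) ^ (m + 1) ≤ K ^ (m + 1) * N ^ x := by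
    rw [mul_left_comm, mul_pow, ← rpow_one_add' hN0.le (by positivity),
      ← rpow_natCast (N ^ (1 + e)), ← rpow_mul hN0.le]
    gcongr
    push_cast
    linarith
  have h3 : N ^ x = N ^ (1 - r) * N ^ (2 * m + 2) := by
    rw [← rpow_natCast, ← rpow_add hN0]
    congr 1
    push_cast
    ring
  calc _ ≤ (K * N ^ x + K ^ (m + 1) * N ^ x) / (N * δ) ^ (2 * m + 2) := by
        rw [h1]
        gcongr
    _ = _ := by
        rw [h3, mul_pow]
        field_simp

lemma sum_range_choose_le_two_pow (n : ℕ) {k : ℕ} (hk : k ≤ n + 1) :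
    ∑ i ∈ Finset.range k, (n.choose i : ℝ) ≤ 2 ^ n := by
  exact_mod_cast (Finset.sum_le_sum_of_subset (Finset.range_mono hk)).trans_eq
    (Nat.sum_range_choose n)

lemma abs_sum_le_of_abs_le {α : Type*} {Y : ℕ → α → ℝ} {C : ℝ} (hbdd : ∀ k ω, |Y k ω| ≤ C)
    (ℓ : ℕ) (ω : α) : |∑ k ∈ Finset.range ℓ, Y k ω| ≤ ℓ * C :=
  (Finset.abs_sum_le_sum_abs _ _).trans <| by
    simpa using Finset.sum_le_sum fun k (_ : k ∈ Finset.range ℓ) => hbdd k ω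

lemma abs_truncation_le {α : Type*} {X : α → ℝ} {b : ℝ} (hb : 0 ≤ b) (ω : α) :
    |truncation X b ω| ≤ b :=
  (abs_truncation_le_bound X b ω).trans_eq (abs_of_nonneg hb)

lemma setOf_lt_abs_sum_subset {α : Type*} (X : ℕ → α → ℝ) (ℓ : ℕ) {s t : ℝ} (b : ℝ) {e : ℝ}
    (hst : s + ℓ * |e| ≤ t) :
    {ω | t < |∑ k ∈ Finset.range ℓ, X k ω|} ⊆
      (⋃ k ∈ Finset.range ℓ, {ω | b ≤ |X k ω|}) ∪
        {ω | s < |∑ k ∈ Finset.range ℓ, (truncation (X k) b ω - e)|} := by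
  intro ω hω
  by_cases hbad : ∃ k ∈ Finset.range ℓ, b ≤ |X k ω|
  · obtain ⟨k, hk, hkb⟩ := hbad
    exact Or.inl (Set.mem_biUnion hk hkb)
  · push Not at hbad
    have htrunc : ∑ k ∈ Finset.range ℓ, (truncation (X k) b ω - e) =
        ∑ k ∈ Finset.range ℓ, X k ω - ℓ * e := by
      rw [Finset.sum_sub_distrib, Finset.sum_const, Finset.card_range, nsmul_eq_mul]
      congr 1
      exact Finset.sum_congr rfl fun k hk => truncation_eq_self (hbad k hk)
    refine Or.inr ?_
    simp only [Set.mem_ofPred_eq, htrunc] at hω ⊢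
    have := abs_sub_abs_le_abs_sub (∑ k ∈ Finset.range ℓ, X k ω) (ℓ * e)
    rw [abs_mul, Nat.abs_cast] at this
    linarith

section Moments

variable {Ω : Type*} [MeasurableSpace Ω] {μ : Measure Ω}

lemma integrable_pow_of_abs_le [IsFiniteMeasure μ] {f : Ω → ℝ} (hf : AEStronglyMeasurable f μ)
    {C : ℝ} (hC : ∀ ω, |f ω| ≤ C) (i : ℕ) : Integrable (fun ω => f ω ^ i) μ :=
  .of_bound (hf.pow i) (C ^ i) <| ae_of_all _ fun ω => by
    rw [Real.norm_eq_abs, abs_pow]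
    exact pow_le_pow_left₀ (abs_nonneg _) (hC ω) i

lemma measureReal_lt_abs_le_integral_pow_div [IsFiniteMeasure μ] {f : Ω → ℝ} {p : ℕ}
    (hp : Even p) (hf : Integrable (fun ω => f ω ^ p) μ) {t : ℝ} (ht : 0 < t) :
    μ.real {ω | t < |f ω|} ≤ (∫ ω, f ω ^ p ∂μ) / t ^ p := by
  rw [le_div_iff₀ (by positivity), mul_comm]
  calc t ^ p * μ.real {ω | t < |f ω|} ≤ t ^ p * μ.real {ω | t ^ p ≤ f ω ^ p} := by
        refine mul_le_mul_of_nonneg_left (measureReal_mono fun ω hω => ?_) (by positivity)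
        change t ^ p ≤ f ω ^ p
        rw [← hp.pow_abs (f ω)]
        exact pow_le_pow_left₀ ht.le (le_of_lt hω) p
    _ ≤ ∫ ω, f ω ^ p ∂μ :=
        mul_meas_ge_le_integral_of_nonneg (ae_of_all _ fun ω => hp.pow_nonneg _) hf _

lemma ProbabilityTheory.IndepFun.integral_add_pow [IsFiniteMeasure μ] {S X : Ω → ℝ}
    (hS : Measurable S) (hX : Measurable X) {CS CX : ℝ} (hSC : ∀ ω, |S ω| ≤ CS)
    (hXC : ∀ ω, |X ω| ≤ CX) (hind : IndepFun S X μ) (p : ℕ) :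
    ∫ ω, (S ω + X ω) ^ p ∂μ =
      ∑ i ∈ Finset.range (p + 1), (∫ ω, S ω ^ i ∂μ) * (∫ ω, X ω ^ (p - i) ∂μ) * p.choose i := by
  have hpair : ∀ i b : ℕ, IndepFun (fun ω => S ω ^ i) (fun ω => X ω ^ b) μ := fun i b =>
    hind.comp (measurable_id.pow_const i) (measurable_id.pow_const b)
  simp_rw [add_pow]
  rw [integral_finsetSum _ fun i _ => Integrable.mul_const (by
    exact (hpair i (p - i)).integrable_mul
      (integrable_pow_of_abs_le hS.aestronglyMeasurable hSC i)
      (integrable_pow_of_abs_le hX.aestronglyMeasurable hXC (p - i))) _]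
  refine Finset.sum_congr rfl fun i _ => ?_
  rw [integral_mul_const, (hpair i (p - i)).integral_fun_mul_eq_mul_integral
    (hS.pow_const i).aestronglyMeasurable (hX.pow_const (p - i)).aestronglyMeasurable]

variable [IsProbabilityMeasure μ]

lemma abs_integral_pow_le_one_add {S : Ω → ℝ} (hS : Measurable S) {C : ℝ}
    (hSC : ∀ ω, |S ω| ≤ C) {i m : ℕ} (hi : i ≤ 2 * m) :
    |∫ ω, S ω ^ i ∂μ| ≤ 1 + ∫ ω, S ω ^ (2 * m) ∂μ := by
  have hint := integrable_pow_of_abs_le hS.aestronglyMeasurable hSC (μ := μ)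
  calc |∫ ω, S ω ^ i ∂μ| ≤ ∫ ω, |S ω| ^ i ∂μ :=
        abs_integral_le_integral_abs.trans_eq (by simp_rw [abs_pow])
    _ ≤ ∫ ω, (1 + S ω ^ (2 * m)) ∂μ :=
        integral_mono (by simpa only [abs_pow] using (hint i).abs)
          ((integrable_const 1).add (hint _)) fun ω => abs_pow_le_one_add_pow_two_mul (S ω) hi
    _ = 1 + ∫ ω, S ω ^ (2 * m) ∂μ := by
        rw [integral_add (integrable_const 1) (hint _)]
        simp

lemma ProbabilityTheory.IndepFun.integral_add_pow_le {S X : Ω → ℝ} (hS : Measurable S)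
    (hX : Measurable X) {CS CX : ℝ} (hSC : ∀ ω, |S ω| ≤ CS) (hXC : ∀ ω, |X ω| ≤ CX)
    (hind : IndepFun S X μ) (hX0 : ∫ ω, X ω ∂μ = 0) {m : ℕ} {w : ℝ}
    (hXmom : ∀ a, 2 ≤ a → a ≤ 2 * m + 2 → ∫ ω, |X ω| ^ a ∂μ ≤ w) :
    ∫ ω, (S ω + X ω) ^ (2 * m + 2) ∂μ ≤
      ∫ ω, S ω ^ (2 * m + 2) ∂μ + 4 ^ (m + 1) * (w * (1 + ∫ ω, S ω ^ (2 * m) ∂μ)) := by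
  set A := 1 + ∫ ω, S ω ^ (2 * m) ∂μ
  have hw : 0 ≤ w := (integral_nonneg fun ω => by positivity).trans (hXmom 2 le_rfl (by omega))
  have hA : 0 ≤ A := by
    have : 0 ≤ ∫ ω, S ω ^ (2 * m) ∂μ := integral_nonneg fun ω => (even_two_mul m).pow_nonneg _
    positivity
  have hterm : ∀ i ∈ Finset.range (2 * m + 1),
      (∫ ω, S ω ^ i ∂μ) * (∫ ω, X ω ^ (2 * m + 2 - i) ∂μ) * (2 * m + 2).choose i ≤
        (2 * m + 2).choose i * (w * A) := by
    intro i hi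
    have hi : i ≤ 2 * m := Nat.lt_succ_iff.mp (Finset.mem_range.mp hi)
    have hSi : |∫ ω, S ω ^ i ∂μ| ≤ A := abs_integral_pow_le_one_add hS hSC hi
    have hXi : |∫ ω, X ω ^ (2 * m + 2 - i) ∂μ| ≤ w :=
      (abs_integral_le_integral_abs.trans_eq (by simp_rw [abs_pow])).trans
        (hXmom (2 * m + 2 - i) (by omega) (by omega))
    calc _ ≤ |∫ ω, S ω ^ i ∂μ| * |∫ ω, X ω ^ (2 * m + 2 - i) ∂μ| * (2 * m + 2).choose i := by
          rw [← abs_mul]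
          gcongr
          exact le_abs_self _
      _ ≤ A * w * (2 * m + 2).choose i := by gcongr
      _ = _ := by ring
  have hchoose : ∑ i ∈ Finset.range (2 * m + 1), ((2 * m + 2).choose i : ℝ) ≤ 4 ^ (m + 1) :=
    (sum_range_choose_le_two_pow _ (by omega)).trans_eq <| by
      rw [show 2 * m + 2 = 2 * (m + 1) by ring, pow_mul]; norm_num
  rw [hind.integral_add_pow hS hX hSC hXC, Finset.sum_range_succ, Finset.sum_range_succ,
    show 2 * m + 2 - (2 * m + 1) = 1 by omega, Nat.sub_self]
  simp only [pow_one, hX0, mul_zero, zero_mul, add_zero, pow_zero, integral_const, probReal_univ,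
    smul_eq_mul, mul_one, Nat.choose_self, Nat.cast_one]
  calc _ ≤ ∑ i ∈ Finset.range (2 * m + 1), ((2 * m + 2).choose i : ℝ) * (w * A) +
        ∫ ω, S ω ^ (2 * m + 2) ∂μ := add_le_add_left (Finset.sum_le_sum hterm) _
    _ ≤ _ := by
        rw [← Finset.sum_mul, add_comm]
        gcongr

variable {Y : ℕ → Ω → ℝ}

lemma integral_sum_pow_le_sum (hmeas : ∀ k, Measurable (Y k)) (hindep : iIndepFun Y μ) {C : ℝ}
    (hbdd : ∀ k ω, |Y k ω| ≤ C) (hmean : ∀ k, ∫ ω, Y k ω ∂μ = 0) {m : ℕ} {w : ℝ}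
    (hmom : ∀ k a, 2 ≤ a → a ≤ 2 * m + 2 → ∫ ω, |Y k ω| ^ a ∂μ ≤ w) (ℓ : ℕ) :
    ∫ ω, (∑ k ∈ Finset.range ℓ, Y k ω) ^ (2 * m + 2) ∂μ ≤
      ∑ j ∈ Finset.range ℓ,
        4 ^ (m + 1) * (w * (1 + ∫ ω, (∑ k ∈ Finset.range j, Y k ω) ^ (2 * m) ∂μ)) := by
  induction ℓ with
  | zero => simp
  | succ ℓ ih =>
    have hind : IndepFun (fun ω => ∑ k ∈ Finset.range ℓ, Y k ω) (Y ℓ) μ := by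
      simpa [Finset.sum_fn] using
        hindep.indepFun_finsetSum_of_notMem hmeas (Finset.notMem_range_self (n := ℓ))
    simp_rw [Finset.sum_range_succ]
    grw [hind.integral_add_pow_le (Finset.measurable_sum _ fun k _ => hmeas k) (hmeas ℓ)
      (abs_sum_le_of_abs_le hbdd ℓ) (hbdd ℓ) (hmean ℓ) (hmom ℓ), ih]

def rosenthalConst : ℕ → ℝ
  | 0 => 0
  | m + 1 => 4 ^ (m + 1) * (1 + 2 * rosenthalConst m)

lemma rosenthalConst_nonneg : ∀ m, 0 ≤ rosenthalConst m
  | 0 => le_rfl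
  | m + 1 => by have := rosenthalConst_nonneg m; simp only [rosenthalConst]; positivity

theorem integral_sum_pow_le (hmeas : ∀ k, Measurable (Y k)) (hindep : iIndepFun Y μ) {C : ℝ}
    (hbdd : ∀ k ω, |Y k ω| ≤ C) (hmean : ∀ k, ∫ ω, Y k ω ∂μ = 0) (m : ℕ) {w : ℝ}
    (hmom : ∀ k a, 2 ≤ a → a ≤ 2 * m + 2 → ∫ ω, |Y k ω| ^ a ∂μ ≤ w) (ℓ : ℕ) :
    ∫ ω, (∑ k ∈ Finset.range ℓ, Y k ω) ^ (2 * m + 2) ∂μ ≤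
      rosenthalConst (m + 1) * (ℓ * w + (ℓ * w) ^ (m + 1)) := by
  have hw : 0 ≤ w :=
    (integral_nonneg fun ω => by positivity).trans (hmom 0 2 le_rfl (by omega))
  induction m generalizing ℓ with
  | zero =>
    have htel := integral_sum_pow_le_sum hmeas hindep hbdd hmean hmom ℓ
    simp only [mul_zero, pow_zero, integral_const, probReal_univ, smul_eq_mul, mul_one,
      Finset.sum_const, Finset.card_range, nsmul_eq_mul] at htel
    norm_num [rosenthalConst] at htel ⊢
    linarith
  | succ m ih =>
    set D := rosenthalConst (m + 1)
    have hD : 0 ≤ D := rosenthalConst_nonneg (m + 1)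
    have hx : (0 : ℝ) ≤ ℓ * w := by positivity
    have hterm : ∀ j ∈ Finset.range ℓ,
        4 ^ (m + 2) * (w * (1 + ∫ ω, (∑ k ∈ Finset.range j, Y k ω) ^ (2 * (m + 1)) ∂μ)) ≤
          4 ^ (m + 2) * (w * (1 + D * (ℓ * w + (ℓ * w) ^ (m + 1)))) := by
      intro j hj
      have hjℓ : (j : ℝ) ≤ ℓ := by exact_mod_cast (Finset.mem_range.mp hj).le
      grw [show 2 * (m + 1) = 2 * m + 2 by ring,
        ih (fun k a h2 ha => hmom k a h2 (by omega)) j, hjℓ]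
    calc _ ≤ _ := integral_sum_pow_le_sum hmeas hindep hbdd hmean hmom ℓ
      _ ≤ _ := Finset.sum_le_sum hterm
      _ = 4 ^ (m + 2) * (ℓ * w + D * ((ℓ * w) ^ 2 + (ℓ * w) ^ (m + 2))) := by
        simp only [Finset.sum_const, Finset.card_range, nsmul_eq_mul]
        ring
      _ ≤ _ := by
        have hsq := mul_le_mul_of_nonneg_left (sq_le_add_pow_succ hx (m := m + 1) (by omega)) hD
        rw [show rosenthalConst (m + 1 + 1) = 4 ^ (m + 2) * (1 + 2 * D) from rfl, mul_assoc]
        gcongr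
        nlinarith [pow_nonneg hx (m + 2)]

theorem measureReal_lt_abs_sum_le (hmeas : ∀ k, Measurable (Y k)) (hindep : iIndepFun Y μ)
    {C : ℝ} (hbdd : ∀ k ω, |Y k ω| ≤ C) (hmean : ∀ k, ∫ ω, Y k ω ∂μ = 0) (m : ℕ) {v c : ℝ}
    (hc : 0 < c) (hmom : ∀ k a, 2 ≤ a → a ≤ 2 * m + 2 → ∫ ω, |Y k ω| ^ a ∂μ ≤ v * c ^ (a - 2))
    (ℓ : ℕ) {t : ℝ} (ht : 0 < t) :
    μ.real {ω | t < |∑ k ∈ Finset.range ℓ, Y k ω|} ≤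
      rosenthalConst (m + 1) * (ℓ * v * c ^ (2 * m) + (ℓ * v) ^ (m + 1)) / t ^ (2 * m + 2) := by
  set U : ℕ → Ω → ℝ := fun k ω => Y k ω / c
  have hUmeas : ∀ k, Measurable (U k) := fun k => (hmeas k).div_const c
  have hUbdd : ∀ k ω, |U k ω| ≤ C / c := fun k ω => by
    simpa [U, abs_div, abs_of_pos hc] using div_le_div_of_nonneg_right (hbdd k ω) hc.le
  have hUmom : ∀ k a, 2 ≤ a → a ≤ 2 * m + 2 → ∫ ω, |U k ω| ^ a ∂μ ≤ v / c ^ 2 := by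
    intro k a h2 ha
    simp_rw [U, abs_div, abs_of_pos hc, div_pow, integral_div]
    rw [div_le_div_iff₀ (by positivity) (by positivity)]
    calc _ ≤ v * c ^ (a - 2) * c ^ 2 := by gcongr; exact hmom k a h2 ha
      _ = v * c ^ a := by rw [mul_assoc, ← pow_add, Nat.sub_add_cancel h2]
  have hUsum := integral_sum_pow_le hUmeas
    (hindep.comp (fun _ x => x / c) fun _ => measurable_id.div_const c) hUbdd
    (fun k => by simp [U, integral_div, hmean k]) m hUmom ℓ
  have hset : {ω | t < |∑ k ∈ Finset.range ℓ, Y k ω|} =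
      {ω | t / c < |∑ k ∈ Finset.range ℓ, U k ω|} := by
    ext ω
    simp only [Set.mem_ofPred_eq, U, ← Finset.sum_div, abs_div, abs_of_pos hc,
      div_lt_div_iff_of_pos_right hc]
  rw [hset]
  refine (measureReal_lt_abs_le_integral_pow_div (p := 2 * m + 2) ⟨m + 1, by ring⟩
    (integrable_pow_of_abs_le (Finset.measurable_sum _ fun k _ => hUmeas k).aestronglyMeasurable
      (abs_sum_le_of_abs_le hUbdd ℓ) _) (by positivity)).trans ?_
  grw [hUsum]
  apply le_of_eq
  rw [div_pow, mul_pow, div_pow, ← pow_mul, div_div_eq_mul_div, mul_assoc, add_mul,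
    show c ^ (2 * m + 2) = c ^ 2 * c ^ (2 * m) by ring, show 2 * (m + 1) = 2 * m + 2 by ring]
  field_simp
  ring

end Moments

section Truncation

variable {Ω : Type*} [MeasurableSpace Ω] {μ : Measure Ω} [IsProbabilityMeasure μ] {X : Ω → ℝ}
  {r b : ℝ}

lemma measureReal_le_abs_le_integral_rpow_div (hr : 0 < r)
    (hXr : Integrable (fun ω => |X ω| ^ r) μ) (hb : 0 < b) :
    μ.real {ω | b ≤ |X ω|} ≤ (∫ ω, |X ω| ^ r ∂μ) / b ^ r := by
  rw [le_div_iff₀ (by positivity), mul_comm]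
  calc b ^ r * μ.real {ω | b ≤ |X ω|} ≤ b ^ r * μ.real {ω | b ^ r ≤ |X ω| ^ r} :=
        mul_le_mul_of_nonneg_left (measureReal_mono fun ω hω =>
          rpow_le_rpow hb.le hω hr.le) (by positivity)
    _ ≤ ∫ ω, |X ω| ^ r ∂μ :=
        mul_meas_ge_le_integral_of_nonneg (ae_of_all _ fun ω => by positivity) hXr _

lemma integral_abs_truncation_pow_le (hX : AEStronglyMeasurable X μ) (hr : 0 < r)
    (hXr : Integrable (fun ω => |X ω| ^ r) μ) (hb : 0 ≤ b) (a : ℕ) :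
    ∫ ω, |truncation X b ω| ^ a ∂μ ≤ (1 + ∫ ω, |X ω| ^ r ∂μ) * b ^ max ((a : ℝ) - r) 0 := by
  calc ∫ ω, |truncation X b ω| ^ a ∂μ ≤ ∫ ω, (1 + |X ω| ^ r) * b ^ max ((a : ℝ) - r) 0 ∂μ := by
        refine integral_mono (integrable_pow_of_abs_le
          (continuous_abs.comp_aestronglyMeasurable hX.truncation) (C := b) (fun ω => ?_) a)
          (((integrable_const 1).add hXr).mul_const _) fun ω => ?_
        · rw [abs_abs]; exact abs_truncation_le hb ω
        · exact pow_le_one_add_rpow_mul_rpow (abs_nonneg _) (abs_truncation_le_abs_self X b ω)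
            (abs_truncation_le hb ω) hr a
    _ = (1 + ∫ ω, |X ω| ^ r ∂μ) * b ^ max ((a : ℝ) - r) 0 := by
        rw [integral_mul_const, integral_add (integrable_const 1) hXr]
        simp

lemma integral_abs_truncation_sub_pow_le (hX : AEStronglyMeasurable X μ) (hr : 0 < r)
    (hXr : Integrable (fun ω => |X ω| ^ r) μ) (hb : 1 ≤ b) {c : ℝ} (hc : |c| ≤ 1) {a : ℕ}
    (ha : 1 ≤ a) :
    ∫ ω, |truncation X b ω - c| ^ a ∂μ ≤
      2 ^ a * (1 + ∫ ω, |X ω| ^ r ∂μ) * b ^ max ((a : ℝ) - r) 0 := by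
  set B := b ^ max ((a : ℝ) - r) 0
  have hB : 1 ≤ B := one_le_rpow hb (le_max_right _ _)
  have hρ : 0 ≤ ∫ ω, |X ω| ^ r ∂μ := integral_nonneg fun ω => by positivity
  have hint : Integrable (fun ω => |truncation X b ω| ^ a) μ :=
    integrable_pow_of_abs_le (continuous_abs.comp_aestronglyMeasurable hX.truncation) (C := b)
      (fun ω => by rw [abs_abs]; exact abs_truncation_le (zero_le_one.trans hb) ω) a
  calc ∫ ω, |truncation X b ω - c| ^ a ∂μ
      ≤ ∫ ω, 2 ^ (a - 1) * (|truncation X b ω| ^ a + 1) ∂μ := by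
        refine integral_mono ?_ ((hint.add (integrable_const 1)).const_mul _) fun ω => ?_
        · refine integrable_pow_of_abs_le (continuous_abs.comp_aestronglyMeasurable
            (hX.truncation.sub aestronglyMeasurable_const)) (C := b + 1) (fun ω => ?_) a
          rw [abs_abs]
          exact (abs_sub _ _).trans (add_le_add (abs_truncation_le (zero_le_one.trans hb) ω) hc)
        · calc |truncation X b ω - c| ^ a ≤ (|truncation X b ω| + 1) ^ a := by
                gcongr
                exact (abs_sub _ _).trans (by linarith)
            _ ≤ _ := by simpa using add_pow_le (abs_nonneg (truncation X b ω)) zero_le_one a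
    _ = 2 ^ (a - 1) * (∫ ω, |truncation X b ω| ^ a ∂μ + 1) := by
        rw [integral_const_mul, integral_add hint (integrable_const 1)]
        simp
    _ ≤ 2 ^ (a - 1) * ((1 + ∫ ω, |X ω| ^ r ∂μ) * B + (1 + ∫ ω, |X ω| ^ r ∂μ) * B) := by
        gcongr
        · exact integral_abs_truncation_pow_le hX hr hXr (zero_le_one.trans hb) a
        · nlinarith
    _ = _ := by
        rw [← two_mul, ← mul_assoc, ← pow_succ, Nat.sub_add_cancel ha, mul_assoc]

lemma integral_abs_truncation_sub_pow_le_chord (hX : AEStronglyMeasurable X μ) (hr : 0 < r)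
    (hXr : Integrable (fun ω => |X ω| ^ r) μ) (hb : 1 ≤ b) {c : ℝ} (hc : |c| ≤ 1) {m : ℕ}
    {e θ : ℝ} (hchord : ∀ a : ℕ, 2 ≤ a → a ≤ 2 * m + 2 → max ((a : ℝ) - r) 0 ≤ e + θ * (a - 2))
    {a : ℕ} (h2 : 2 ≤ a) (ha : a ≤ 2 * m + 2) :
    ∫ ω, |truncation X b ω - c| ^ a ∂μ ≤
      4 ^ (m + 1) * (1 + ∫ ω, |X ω| ^ r ∂μ) * b ^ e * (b ^ θ) ^ (a - 2) := by
  have hρ : 0 ≤ ∫ ω, |X ω| ^ r ∂μ := integral_nonneg fun ω => by positivity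
  grw [integral_abs_truncation_sub_pow_le hX hr hXr hb hc (by omega), mul_assoc _ (b ^ e)]
  gcongr
  · calc (2 : ℝ) ^ a ≤ 2 ^ (2 * (m + 1)) := pow_le_pow_right₀ one_le_two (by omega)
      _ = 4 ^ (m + 1) := by rw [pow_mul]; norm_num
  · rw [← rpow_natCast, ← rpow_mul (by linarith), ← rpow_add (by linarith), Nat.cast_sub h2,
      Nat.cast_two]
    exact rpow_le_rpow_of_exponent_le hb (hchord a h2 ha)

end Truncation

section IID

variable {Ω : Type*} [MeasurableSpace Ω] {μ : Measure Ω} [IsProbabilityMeasure μ]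
  {ζ : ℕ → Ω → ℝ}

lemma measureReal_lt_abs_sum_le_add (hid : ∀ k, IdentDistrib (ζ k) (ζ 0) μ μ) (ℓ : ℕ)
    {s t : ℝ} (b : ℝ) {e : ℝ} (hst : s + ℓ * |e| ≤ t) :
    μ.real {ω | t < |∑ k ∈ Finset.range ℓ, ζ k ω|} ≤
      ℓ * μ.real {ω | b ≤ |ζ 0 ω|} +
        μ.real {ω | s < |∑ k ∈ Finset.range ℓ, (truncation (ζ k) b ω - e)|} := by
  have hsame : ∀ k, μ.real {ω | b ≤ |ζ k ω|} = μ.real {ω | b ≤ |ζ 0 ω|} := fun k =>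
    congrArg ENNReal.toReal <|
      (hid k).measure_mem_eq (s := {x | b ≤ |x|}) (measurableSet_le measurable_const measurable_abs)
  refine (measureReal_mono (setOf_lt_abs_sum_subset ζ ℓ b hst)).trans <|
    (measureReal_union_le _ _).trans (add_le_add_left ?_ _)
  refine (measureReal_biUnion_finset_le _ _).trans_eq ?_
  simp [hsame]

theorem exists_measureReal_lt_abs_sum_truncation_le (hmeas : ∀ k, Measurable (ζ k))
    (hindep : iIndepFun ζ μ) (hid : ∀ k, IdentDistrib (ζ k) (ζ 0) μ μ) {r : ℝ} (hr : 1 < r)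
    (hmom : Integrable (fun ω => |ζ 0 ω| ^ r) μ) {δ : ℝ} (hδ : 0 < δ) :
    ∃ K, ∀ n : ℕ, 1 ≤ n → |∫ ω, truncation (ζ 0) n ω ∂μ| ≤ 1 →
      μ.real {ω | n * δ <
        |∑ k ∈ Finset.range n, (truncation (ζ k) n ω - ∫ ω, truncation (ζ 0) n ω ∂μ)|} ≤
        K * (n : ℝ) ^ (1 - r) := by
  set m := ⌈r⌉₊
  have hm : 1 ≤ m := Nat.one_le_iff_ne_zero.mpr (Nat.ceil_pos.mpr (by linarith)).ne'
  obtain ⟨e, θ, he, hend, hexp, hchord⟩ :=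
    exists_chord_exponents hr hm (by linarith [Nat.le_ceil r])
  set K := 4 ^ (m + 1) * (1 + ∫ ω, |ζ 0 ω| ^ r ∂μ)
  have hK : 0 ≤ K := by
    have : 0 ≤ ∫ ω, |ζ 0 ω| ^ r ∂μ := integral_nonneg fun ω => by positivity
    positivity
  refine ⟨rosenthalConst (m + 1) * (K + K ^ (m + 1)) / δ ^ (2 * m + 2), fun n hn hE => ?_⟩
  set N : ℝ := (n : ℝ) with hNdef
  have hN : 1 ≤ N := Nat.one_le_cast.mpr hn
  set E := ∫ ω, truncation (ζ 0) N ω ∂μ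
  set Y : ℕ → Ω → ℝ := fun k ω => truncation (ζ k) N ω - E
  have hg : Measurable fun x : ℝ => Set.indicator (Set.Ioc (-N) N) id x - E :=
    (measurable_id.indicator measurableSet_Ioc).sub_const E
  have hYid : ∀ k, IdentDistrib (Y k) (Y 0) μ μ := fun k => (hid k).comp hg
  have hYmean : ∀ k, ∫ ω, Y k ω ∂μ = 0 := fun k => by
    rw [(hYid k).integral_eq, integral_sub
      (hmeas 0).aestronglyMeasurable.integrable_truncation (integrable_const E)]
    simp [E]
  have hYbdd : ∀ k ω, |Y k ω| ≤ N + 1 := fun k ω =>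
    (abs_sub _ _).trans (add_le_add (abs_truncation_le (by linarith) ω) hE)
  have hYmom : ∀ k a, 2 ≤ a → a ≤ 2 * m + 2 →
      ∫ ω, |Y k ω| ^ a ∂μ ≤ K * N ^ e * (N ^ θ) ^ (a - 2) := fun k a h2 ha =>
    (((hYid k).comp (measurable_abs.pow_const a)).integral_eq.trans_le
      (integral_abs_truncation_sub_pow_le_chord (hmeas 0).aestronglyMeasurable (by linarith)
        hmom hN hE hchord h2 ha))
  refine (measureReal_lt_abs_sum_le (fun k => hg.comp (hmeas k))
    (hindep.comp (fun _ => _) fun _ => hg) hYbdd hYmean m (by positivity) hYmom n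
    (t := N * δ) (by positivity)).trans ?_
  rw [← hNdef, mul_div_assoc, mul_div_assoc, mul_assoc (rosenthalConst _)]
  exact mul_le_mul_of_nonneg_left (rosenthal_terms_div_pow_le hN hK he hδ hend hexp)
    (rosenthalConst_nonneg _)

end IID

/-- Display (2.4): if `ζ_1, ζ_2, …` are i.i.d. with mean zero and `E|ζ_1|^r < ∞` for some
`r > 1`, then for any fixed `δ > 0`, `P(|Σ_{k=1}^n ζ_k| > nδ) = O(n^{1−r})` as `n → ∞`. -/
theorem iid_tail_bound
    {Ω : Type*} [MeasurableSpace Ω] {μ : Measure Ω} [IsProbabilityMeasure μ]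
    (ζ : ℕ → Ω → ℝ)
    (hmeas : ∀ k, Measurable (ζ k))
    (hindep : iIndepFun ζ μ)
    (hid : ∀ k, IdentDistrib (ζ k) (ζ 0) μ μ)
    (hint : Integrable (ζ 0) μ)
    (hmean : ∫ ω, ζ 0 ω ∂μ = 0)
    (r : ℝ) (hr : 1 < r)
    (hmom : Integrable (fun ω => |ζ 0 ω| ^ r) μ)
    (δ : ℝ) (hδ : 0 < δ) :
    (fun n : ℕ => (μ {ω | (n : ℝ) * δ < |∑ k ∈ Finset.range n, ζ k ω|}).toReal)
      =O[atTop] (fun n : ℕ => (n : ℝ) ^ ((1 : ℝ) - r)) := by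
  obtain ⟨K, hK⟩ := exists_measureReal_lt_abs_sum_truncation_le hmeas hindep hid hr hmom
    (half_pos hδ)
  have htrunc : ∀ᶠ n : ℕ in atTop, |∫ ω, truncation (ζ 0) n ω ∂μ| ≤ min (δ / 2) 1 := by
    have h := ((tendsto_integral_truncation hint).comp tendsto_natCast_atTop_atTop).abs
    rw [hmean, abs_zero] at h
    filter_upwards [h.eventually (gt_mem_nhds (lt_min (half_pos hδ) one_pos))] with n hn
    exact hn.le
  refine IsBigO.of_bound (∫ ω, |ζ 0 ω| ^ r ∂μ + K) ?_
  filter_upwards [eventually_ge_atTop 1, htrunc] with n hn hE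
  have hN : (0 : ℝ) < n := Nat.cast_pos.mpr hn
  rw [norm_of_nonneg ENNReal.toReal_nonneg, norm_of_nonneg (by positivity), ← measureReal_def]
  calc _ ≤ n * μ.real {ω | n ≤ |ζ 0 ω|} + μ.real {ω | n * (δ / 2) <
          |∑ k ∈ Finset.range n, (truncation (ζ k) n ω - ∫ ω, truncation (ζ 0) n ω ∂μ)|} :=
        measureReal_lt_abs_sum_le_add hid n n (by
          nlinarith [mul_le_mul_of_nonneg_left (hE.trans (min_le_left _ _)) hN.le])
    _ ≤ n * ((∫ ω, |ζ 0 ω| ^ r ∂μ) / n ^ r) + K * n ^ (1 - r) := by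
        gcongr
        · exact measureReal_le_abs_le_integral_rpow_div (by linarith) hmom hN
        · exact hK n hn (hE.trans (min_le_right _ _))
    _ = (∫ ω, |ζ 0 ω| ^ r ∂μ + K) * n ^ (1 - r) := by
        rw [rpow_sub hN, rpow_one]
        field_simp

end
end

section
/- Let η_1, …, η_n be independent real random variables with mean zero such that max_{1≤i≤n} E|η_i|^β < ∞ for some β > 2, and let ρ > 0 and t > 0. Define the truncated and recentered variables η̃_i = η_i·1{|η_i| ≤ n^ρ} − E[η_i·1{|η_i| ≤ n^ρ}]. Then P((1/√n) Σ_{i=1}^n η̃_i ≥ t_ρ) ≤ K_n · exp(−t_ρ² / (2 M_2)), where M_s := (1/n) Σ_{i=1}^n E|η_i|^s, t_ρ := t − M_β · n^{ρ(1−β)+1/2}, and K_n := exp{(t³ n^{ρ−1/2} / (3 M_2²)) · exp(2 t n^{ρ−1/2} / M_2)}, provided t_ρ > 0. -/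
/-!
Chernoff's method. For `y ≤ a` with `a ≥ 0` one has `e^y ≤ 1 + y + y²/2 · (1 + a/3 · e^a)`,
the cubic Taylor remainder being absorbed into the quadratic term, so a centred `X ≤ b` satisfies
`E e^{λX} ≤ exp (λ² E X² / 2 · (1 + λb/3 · e^{λb}))`. The `η̃_i` are independent, centred, bounded
by `2 n^ρ`, and `E η̃_i² = Var (η_i 1{|η_i| ≤ n^ρ}) ≤ E η_i²`. Multiplying these bounds with
`λ = t_ρ / (√n M_2)` gives the claim with `t_ρ` instead of `t` inside `K_n`; finally `t_ρ ≤ t`.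
-/

open MeasureTheory ProbabilityTheory Filter Real

noncomputable section

namespace Real

theorem exp_le_one_add_add_sq_div_two_of_nonpos {x : ℝ} (hx : x ≤ 0) :
    exp x ≤ 1 + x + x ^ 2 / 2 := by
  have hneg : 1 + -x + (-x) ^ 2 / 2 ≤ exp (-x) := quadratic_le_exp_of_nonneg (by linarith)
  have hinv : exp x * exp (-x) = 1 := by rw [← exp_add, add_neg_cancel, exp_zero]
  nlinarith [exp_pos x, sq_nonneg (x ^ 2)]

theorem exp_le_cubic_mul_exp_of_nonneg {x : ℝ} (hx : 0 ≤ x) :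
    exp x ≤ 1 + x + x ^ 2 / 2 + x ^ 3 / 6 * exp x := by
  set f : ℝ → ℝ := fun y => (1 + y + y ^ 2 / 2) * exp (-y) + y ^ 3 / 6
  have hf : ∀ y, HasDerivAt f (y ^ 2 / 2 * (1 - exp (-y))) y := fun y => by
    have := (((hasDerivAt_id y).const_add 1).add ((hasDerivAt_pow 2 y).div_const 2)).mul
      (hasDerivAt_neg y).exp |>.add ((hasDerivAt_pow 3 y).div_const 6)
    refine this.congr_deriv ?_
    simp only [Pi.add_apply, id]
    ring
  have hmono : MonotoneOn f (Set.Ici 0) :=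
    monotoneOn_of_deriv_nonneg (convex_Ici 0) (fun y _ => (hf y).continuousAt.continuousWithinAt)
      (fun y _ => (hf y).differentiableAt.differentiableWithinAt) fun y hy => by
        rw [interior_Ici] at hy
        rw [(hf y).deriv]
        have : exp (-y) ≤ 1 := exp_le_one_iff.mpr (by linarith [hy.out])
        positivity
  have h0 : f 0 ≤ f x := hmono Set.self_mem_Ici hx hx
  have hinv : exp x * exp (-x) = 1 := by rw [← exp_add, add_neg_cancel, exp_zero]
  norm_num [f] at h0
  nlinarith [exp_pos x, mul_le_mul_of_nonneg_left h0 (exp_pos x).le]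

theorem exp_le_one_add_add_sq_mul_of_le {x a : ℝ} (ha : 0 ≤ a) (hx : x ≤ a) :
    exp x ≤ 1 + x + x ^ 2 / 2 * (1 + a / 3 * exp a) := by
  rcases le_total x 0 with hx0 | hx0
  · have : 0 ≤ x ^ 2 / 2 * (a / 3 * exp a) := by positivity
    nlinarith [exp_le_one_add_add_sq_div_two_of_nonpos hx0]
  · have hcube : x ^ 3 / 6 * exp x ≤ x ^ 2 / 2 * (a / 3 * exp a) := by
      have : x ^ 3 / 6 * exp x = x ^ 2 / 2 * (x / 3 * exp x) := by ring
      rw [this]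
      gcongr
    nlinarith [exp_le_cubic_mul_exp_of_nonneg hx0]

end Real

theorem integrable_sq_of_integrable_abs_rpow {Ω : Type*} [MeasurableSpace Ω] {μ : Measure Ω}
    [IsFiniteMeasure μ] {X : Ω → ℝ} (hX : AEStronglyMeasurable X μ) {p : ℝ} (hp : 2 ≤ p)
    (h : Integrable (fun ω => |X ω| ^ p) μ) : Integrable (fun ω => X ω ^ 2) μ := by
  have := integrable_norm_rpow_of_le hX zero_le_two (by linarith) hp (by simpa using h)
  simpa [rpow_two, sq_abs] using this

def truncateAbs (c x : ℝ) : ℝ := if |x| ≤ c then x else 0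

theorem abs_truncateAbs_le {c : ℝ} (hc : 0 ≤ c) (x : ℝ) : |truncateAbs c x| ≤ c := by
  unfold truncateAbs
  split_ifs with h
  exacts [h, by simpa using hc]

theorem sq_truncateAbs_le (c x : ℝ) : truncateAbs c x ^ 2 ≤ x ^ 2 := by
  unfold truncateAbs
  split_ifs
  exacts [le_rfl, by simpa using sq_nonneg x]

theorem measurable_truncateAbs (c : ℝ) : Measurable (truncateAbs c) :=
  Measurable.ite (measurableSet_le measurable_abs measurable_const) measurable_id measurable_const

section Truncation

variable {Ω : Type*} [MeasurableSpace Ω] {μ : Measure Ω} [IsProbabilityMeasure μ] {c : ℝ}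

theorem abs_truncateAbs_sub_integral_le (hc : 0 ≤ c) (X : Ω → ℝ) (ω : Ω) :
    |truncateAbs c (X ω) - ∫ ω', truncateAbs c (X ω') ∂μ| ≤ 2 * c := by
  have hint : |∫ ω', truncateAbs c (X ω') ∂μ| ≤ c := by
    simpa using norm_integral_le_of_norm_le_const (μ := μ)
      (ae_of_all _ fun ω' => (norm_eq_abs (truncateAbs c (X ω'))).trans_le
        (abs_truncateAbs_le hc (X ω')))
  linarith [abs_sub (truncateAbs c (X ω)) (∫ ω', truncateAbs c (X ω') ∂μ),
    abs_truncateAbs_le hc (X ω)]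

theorem integral_sq_truncateAbs_sub_integral_le {X : Ω → ℝ} (hX : Measurable X)
    (hX2 : Integrable (fun ω => X ω ^ 2) μ) :
    ∫ ω, (truncateAbs c (X ω) - ∫ ω', truncateAbs c (X ω') ∂μ) ^ 2 ∂μ ≤ ∫ ω, X ω ^ 2 ∂μ := by
  have hY : Measurable (truncateAbs c ∘ X) := (measurable_truncateAbs c).comp hX
  calc _ = Var[truncateAbs c ∘ X; μ] := (variance_eq_integral hY.aemeasurable).symm
    _ ≤ μ[(truncateAbs c ∘ X) ^ 2] := variance_le_expectation_sq hY.aestronglyMeasurable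
    _ ≤ ∫ ω, X ω ^ 2 ∂μ := by
      refine integral_mono_of_nonneg (ae_of_all _ fun ω => sq_nonneg _) hX2
        (ae_of_all _ fun ω => sq_truncateAbs_le c (X ω))

end Truncation

namespace ProbabilityTheory

variable {Ω : Type*} [MeasurableSpace Ω] {μ : Measure Ω}

theorem integrable_exp_mul_of_ae_le [IsFiniteMeasure μ] {X : Ω → ℝ} (hX : AEMeasurable X μ)
    {b l : ℝ} (hl : 0 ≤ l) (hXb : ∀ᵐ ω ∂μ, X ω ≤ b) :
    Integrable (fun ω => exp (l * X ω)) μ :=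
  .of_bound (hX.const_mul l).exp.aestronglyMeasurable (exp (l * b)) <| hXb.mono fun ω hω => by
    rw [norm_of_nonneg (exp_pos _).le]
    exact exp_le_exp.mpr (mul_le_mul_of_nonneg_left hω hl)

theorem mgf_le_exp_of_ae_le [IsProbabilityMeasure μ] {X : Ω → ℝ} (hX : MemLp X 2 μ)
    (hmean : μ[X] = 0) {b l : ℝ} (hb : 0 ≤ b) (hl : 0 ≤ l) (hXb : ∀ᵐ ω ∂μ, X ω ≤ b) :
    mgf X μ l ≤ exp (l ^ 2 / 2 * μ[X ^ 2] * (1 + l * b / 3 * exp (l * b))) := by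
  set κ := 1 + l * b / 3 * exp (l * b)
  have hX1 : Integrable X μ := hX.integrable one_le_two
  have hpoint : ∀ᵐ ω ∂μ, exp (l * X ω) ≤ 1 + l * X ω + l ^ 2 / 2 * κ * X ω ^ 2 :=
    hXb.mono fun ω hω => by
      refine (exp_le_one_add_add_sq_mul_of_le (mul_nonneg hl hb)
        (mul_le_mul_of_nonneg_left hω hl)).trans_eq ?_
      ring
  have hlin : Integrable (fun ω => 1 + l * X ω) μ := (integrable_const 1).add (hX1.const_mul l)
  have hsq : Integrable (fun ω => l ^ 2 / 2 * κ * X ω ^ 2) μ := hX.integrable_sq.const_mul _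
  calc mgf X μ l ≤ ∫ ω, (1 + l * X ω + l ^ 2 / 2 * κ * X ω ^ 2) ∂μ :=
        integral_mono_ae (integrable_exp_mul_of_ae_le hX.aestronglyMeasurable.aemeasurable hl hXb)
          (hlin.add hsq) hpoint
    _ = 1 + l ^ 2 / 2 * μ[X ^ 2] * κ := by
        rw [integral_add hlin hsq, integral_add (integrable_const 1) (hX1.const_mul l),
          integral_const_mul, integral_const_mul, hmean]
        simp only [integral_const, probReal_univ, smul_eq_mul, Pi.pow_apply]
        ring
    _ ≤ exp (l ^ 2 / 2 * μ[X ^ 2] * κ) := by linarith [add_one_le_exp (l ^ 2 / 2 * μ[X ^ 2] * κ)]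

theorem iIndepFun.measureReal_sum_ge_le_exp {ι : Type*} {X : ι → Ω → ℝ}
    (hindep : iIndepFun X μ) (hmeas : ∀ i, Measurable (X i)) {s : Finset ι}
    (hL2 : ∀ i ∈ s, MemLp (X i) 2 μ) (hmean : ∀ i ∈ s, μ[X i] = 0) {b V x : ℝ} (hb : 0 ≤ b)
    (hXb : ∀ i ∈ s, ∀ᵐ ω ∂μ, X i ω ≤ b) (hV : 0 < V) (hvar : ∑ i ∈ s, μ[X i ^ 2] ≤ V)
    (hx : 0 ≤ x) :
    μ.real {ω | x ≤ ∑ i ∈ s, X i ω} ≤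
      exp (-x ^ 2 / (2 * V) + x ^ 3 * b / (6 * V ^ 2) * exp (x * b / V)) := by
  have := hindep.isProbabilityMeasure
  set l := x / V
  have hl : 0 ≤ l := div_nonneg hx hV.le
  set κ := 1 + l * b / 3 * exp (l * b)
  have hchernoff := measure_ge_le_exp_mul_mgf (X := ∑ i ∈ s, X i) x hl
    (hindep.integrable_exp_mul_sum hmeas fun i hi =>
      integrable_exp_mul_of_ae_le (hmeas i).aemeasurable hl (hXb i hi))
  simp only [Finset.sum_apply] at hchernoff
  have hprod : ∏ i ∈ s, mgf (X i) μ l ≤ exp (l ^ 2 / 2 * V * κ) := by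
    calc ∏ i ∈ s, mgf (X i) μ l ≤ ∏ i ∈ s, exp (l ^ 2 / 2 * μ[X i ^ 2] * κ) :=
          Finset.prod_le_prod (fun i _ => mgf_nonneg) fun i hi =>
            mgf_le_exp_of_ae_le (hL2 i hi) (hmean i hi) hb hl (hXb i hi)
      _ = exp (l ^ 2 / 2 * (∑ i ∈ s, μ[X i ^ 2]) * κ) := by
          rw [← exp_sum, ← Finset.sum_mul, ← Finset.mul_sum]
      _ ≤ exp (l ^ 2 / 2 * V * κ) := by gcongr
  calc μ.real {ω | x ≤ ∑ i ∈ s, X i ω} ≤ exp (-l * x) * ∏ i ∈ s, mgf (X i) μ l := by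
        rwa [hindep.mgf_sum hmeas] at hchernoff
    _ ≤ exp (-l * x) * exp (l ^ 2 / 2 * V * κ) := by gcongr
    _ = exp (-x ^ 2 / (2 * V) + x ^ 3 * b / (6 * V ^ 2) * exp (x * b / V)) := by
        rw [← exp_add]
        congr 1
        simp only [l, κ]
        field_simp
        ring

theorem iIndepFun.measureReal_sum_truncateAbs_sub_ge_le {ι : Type*} {X : ι → Ω → ℝ}
    (hindep : iIndepFun X μ) (hmeas : ∀ i, Measurable (X i))
    {s : Finset ι} (hX2 : ∀ i ∈ s, Integrable (fun ω => X i ω ^ 2) μ) {c V x : ℝ} (hc : 0 ≤ c)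
    (hV : 0 < V) (hvar : ∑ i ∈ s, ∫ ω, X i ω ^ 2 ∂μ ≤ V) (hx : 0 ≤ x) :
    μ.real {ω | x ≤ ∑ i ∈ s, (truncateAbs c (X i ω) - ∫ ω', truncateAbs c (X i ω') ∂μ)} ≤
      exp (-x ^ 2 / (2 * V) + x ^ 3 * c / (3 * V ^ 2) * exp (2 * x * c / V)) := by
  have := hindep.isProbabilityMeasure
  set Y : ι → Ω → ℝ := fun i ω => truncateAbs c (X i ω) - ∫ ω', truncateAbs c (X i ω') ∂μ
  have hYmeas : ∀ i, Measurable (Y i) := fun i =>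
    ((measurable_truncateAbs c).comp (hmeas i)).sub_const _
  have hYindep : iIndepFun Y μ :=
    hindep.comp (fun i x => truncateAbs c x - ∫ ω', truncateAbs c (X i ω') ∂μ) fun i =>
      (measurable_truncateAbs c).sub_const _
  have hYbound : ∀ i ω, |Y i ω| ≤ 2 * c := fun i => abs_truncateAbs_sub_integral_le hc (X i)
  have hYmean : ∀ i, μ[Y i] = 0 := fun i => by
    have hint : Integrable (fun ω => truncateAbs c (X i ω)) μ :=
      .of_bound ((measurable_truncateAbs c).comp (hmeas i)).aestronglyMeasurable c
        (ae_of_all _ fun ω => abs_truncateAbs_le hc (X i ω))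
    simp only [Y]
    rw [integral_sub hint (integrable_const _)]
    simp
  have := hYindep.measureReal_sum_ge_le_exp hYmeas
    (fun i _ => .of_bound (hYmeas i).aestronglyMeasurable _ (ae_of_all _ (hYbound i)))
    (fun i _ => hYmean i) (by positivity)
    (fun i _ => ae_of_all _ fun ω => (le_abs_self _).trans (hYbound i ω)) hV
    ((Finset.sum_le_sum fun i hi =>
      integral_sq_truncateAbs_sub_integral_le (hmeas i) (hX2 i hi)).trans hvar) hx
  exact this.trans_eq (by ring_nf)

theorem iIndepFun.measureReal_sum_truncateAbs_sub_div_sqrt_ge_le {n : ℕ} (hn : 0 < n)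
    {X : Fin n → Ω → ℝ}
    (hindep : iIndepFun X μ) (hmeas : ∀ i, Measurable (X i))
    (hX2 : ∀ i, Integrable (fun ω => X i ω ^ 2) μ) {ρ σ r : ℝ} (hσ : 0 < σ)
    (hvar : ∑ i, ∫ ω, X i ω ^ 2 ∂μ ≤ n * σ) (hr : 0 ≤ r) :
    μ.real {ω | r ≤ (∑ i, (truncateAbs (n ^ ρ) (X i ω) - ∫ ω', truncateAbs (n ^ ρ) (X i ω') ∂μ))
        / √n} ≤
      exp (r ^ 3 * n ^ (ρ - 1 / 2) / (3 * σ ^ 2) * exp (2 * r * n ^ (ρ - 1 / 2) / σ) -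
        r ^ 2 / (2 * σ)) := by
  have hn0 : (0 : ℝ) < n := Nat.cast_pos.mpr hn
  have hc : (n : ℝ) ^ ρ = n ^ (ρ - 1 / 2) * √n := by
    rw [sqrt_eq_rpow, ← rpow_add hn0]
    norm_num
  set s := √(n : ℝ)
  have hs_pos : 0 < s := sqrt_pos.mpr hn0
  simp_rw [le_div_iff₀ hs_pos]
  refine (hindep.measureReal_sum_truncateAbs_sub_ge_le hmeas (fun i _ => hX2 i)
    (rpow_nonneg hn0.le ρ) (mul_pos hn0 hσ) hvar (mul_nonneg hr hs_pos.le)).trans_eq ?_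
  have hn_sq : (n : ℝ) = s ^ 2 := (sq_sqrt hn0.le).symm
  set ν := (n : ℝ) ^ (ρ - 1 / 2)
  rw [hc, hn_sq]
  field_simp
  ring_nf

end ProbabilityTheory

theorem truncated_sum_bound_general
    {Ω : Type*} [MeasurableSpace Ω] {μ : Measure Ω} [IsProbabilityMeasure μ]
    (n : ℕ) (hn : 0 < n) (η : Fin n → Ω → ℝ)
    (hmeas : ∀ i, Measurable (η i))
    (hindep : iIndepFun η μ)
    (β : ℝ) (hβ : 2 < β)
    (hmom : ∀ i, Integrable (fun ω => |η i ω| ^ β) μ)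
    (ρ t : ℝ)
    (M : ℝ → ℝ) (hM : ∀ s : ℝ, M s = (∑ i, ∫ ω, |η i ω| ^ s ∂μ) / n)
    (tρ : ℝ) (htρ : tρ = t - M β * (n : ℝ) ^ (ρ * (1 - β) + 1 / 2))
    (htρpos : 0 < tρ)
    (Kn : ℝ) (hKn : Kn = Real.exp ((t ^ 3 * (n : ℝ) ^ (ρ - 1 / 2) / (3 * (M 2) ^ 2)) *
      Real.exp (2 * t * (n : ℝ) ^ (ρ - 1 / 2) / M 2)))
    (ηt : Fin n → Ω → ℝ)
    (hηt : ∀ i ω, ηt i ω = (if |η i ω| ≤ (n : ℝ) ^ ρ then η i ω else 0) -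
      ∫ ω', (if |η i ω'| ≤ (n : ℝ) ^ ρ then η i ω' else 0) ∂μ) :
    (μ {ω | tρ ≤ (∑ i, ηt i ω) / Real.sqrt n}).toReal ≤
      Kn * Real.exp (-(tρ ^ 2) / (2 * M 2)) := by
  rw [← measureReal_def]
  have hn0 : (0 : ℝ) < n := Nat.cast_pos.mpr hn
  have hM_nonneg : ∀ s, 0 ≤ M s := fun s => by
    rw [hM]
    exact div_nonneg (Finset.sum_nonneg fun i _ => integral_nonneg fun ω => by positivity) hn0.le
  have hsum_sq : ∑ i, ∫ ω, η i ω ^ 2 ∂μ = n * M 2 := by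
    simp only [hM, rpow_two, sq_abs]
    field_simp
  have htρt : tρ ≤ t := by
    rw [htρ]
    linarith [mul_nonneg (hM_nonneg β) (rpow_nonneg hn0.le (ρ * (1 - β) + 1 / 2))]
  rcases (hM_nonneg 2).eq_or_lt with hM2 | hM2
  · simp only [hKn, ← hM2, zero_pow two_ne_zero, mul_zero, div_zero, exp_zero, mul_one]
    exact measureReal_le_one
  simp_rw [hηt]
  calc _ ≤ exp (tρ ^ 3 * n ^ (ρ - 1 / 2) / (3 * M 2 ^ 2) * exp (2 * tρ * n ^ (ρ - 1 / 2) / M 2) -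
        tρ ^ 2 / (2 * M 2)) :=
      hindep.measureReal_sum_truncateAbs_sub_div_sqrt_ge_le hn hmeas
        (fun i => integrable_sq_of_integrable_abs_rpow (hmeas i).aestronglyMeasurable hβ.le
          (hmom i))
        hM2 hsum_sq.le htρpos.le
    _ ≤ exp (t ^ 3 * n ^ (ρ - 1 / 2) / (3 * M 2 ^ 2) * exp (2 * t * n ^ (ρ - 1 / 2) / M 2) -
        tρ ^ 2 / (2 * M 2)) := by
      have ht : 0 < t := htρpos.trans_le htρt
      gcongr
    _ = Kn * exp (-(tρ ^ 2) / (2 * M 2)) := by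
      rw [hKn, ← exp_add, neg_div, sub_eq_add_neg]

/-- Display (3.21): with `η_1, …, η_n` independent, mean zero, `max_i E|η_i|^β < ∞` for
some `β > 2`, and the truncated recentered variables
`η̃_i = η_i 1{|η_i| ≤ n^ρ} − E[η_i 1{|η_i| ≤ n^ρ}]`, one has, provided `t_ρ > 0`,
`P(n^{-1/2} Σ η̃_i ≥ t_ρ) ≤ K_n exp(−t_ρ²/(2 M_2))`, where `M_s = n^{-1} Σ_i E|η_i|^s`,
`t_ρ = t − M_β n^{ρ(1−β)+1/2}` and
`K_n = exp{(t³ n^{ρ−1/2}/(3 M_2²)) exp(2 t n^{ρ−1/2}/M_2)}`. -/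
theorem truncated_sum_bound
    {Ω : Type*} [MeasurableSpace Ω] {μ : Measure Ω} [IsProbabilityMeasure μ]
    (n : ℕ) (hn : 0 < n) (η : Fin n → Ω → ℝ)
    (hmeas : ∀ i, Measurable (η i))
    (hindep : iIndepFun η μ)
    (hint : ∀ i, Integrable (η i) μ)
    (hmean : ∀ i, ∫ ω, η i ω ∂μ = 0)
    (β : ℝ) (hβ : 2 < β)
    (hmom : ∀ i, Integrable (fun ω => |η i ω| ^ β) μ)
    (ρ t : ℝ) (hρ : 0 < ρ) (ht : 0 < t)
    (M : ℝ → ℝ) (hM : ∀ s : ℝ, M s = (∑ i, ∫ ω, |η i ω| ^ s ∂μ) / n)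
    (tρ : ℝ) (htρ : tρ = t - M β * (n : ℝ) ^ (ρ * (1 - β) + 1 / 2))
    (htρpos : 0 < tρ)
    (Kn : ℝ) (hKn : Kn = Real.exp ((t ^ 3 * (n : ℝ) ^ (ρ - 1 / 2) / (3 * (M 2) ^ 2)) *
      Real.exp (2 * t * (n : ℝ) ^ (ρ - 1 / 2) / M 2)))
    (ηt : Fin n → Ω → ℝ)
    (hηt : ∀ i ω, ηt i ω = (if |η i ω| ≤ (n : ℝ) ^ ρ then η i ω else 0) -
      ∫ ω', (if |η i ω'| ≤ (n : ℝ) ^ ρ then η i ω' else 0) ∂μ) :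
    (μ {ω | tρ ≤ (∑ i, ηt i ω) / Real.sqrt n}).toReal ≤
      Kn * Real.exp (-(tρ ^ 2) / (2 * M 2)) :=
  truncated_sum_bound_general n hn η hmeas hindep β hβ hmom ρ t M hM tρ htρ htρpos Kn hKn ηt hηt

end
end
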